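/- arXiv:2401.12095 — 6 statements merged into one kernel-verified Lean document; each statement's English description precedes it below -/
import Mathlib

section
/- Let b(z) = ∑_{j=−m}^{k} b_j z^j be a Laurent polynomial with b_{−m} b_k ≠ 0 and max(m,k) ≥ 2. If |b_1| ≥ |b_{−1}| + ∑_{j=2}^{k} j|b_j| + ∑_{j=2}^{m} j|b_{−j}|, then b restricted to the unit circle is injective (i.e., b(𝕋) is a Jordan curve). -/
/-!
If `b(ζ₁) = b(ζ₂)` with `ζ₁ ≠ ζ₂` on the unit circle, isolating the linear term gives
`b₁ (ζ₁ - ζ₂) = -∑_{j ≠ 0, 1} b_j (ζ₁^j - ζ₂^j)`. On the circle `|ζ₁^n - ζ₂^n| ≤ n |ζ₁ - ζ₂|`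
(the factor `∑ ζ₁^i ζ₂^(n-1-i)` is a sum of `n` unit vectors), and the same holds for negative
powers since inversion is an isometry of the circle. For `n ≥ 2` the inequality is strict, because
the unit vectors `ζ₂^(n-1)` and `ζ₁ ζ₂^(n-2)` differ. As the extreme coefficient of degree `≥ 2`
is nonzero, this yields `|b₁| < |b₋₁| + ∑ |j| |b_j|`, contradicting the coefficient condition.
-/

open Finset

lemma norm_geom_sum₂_le {R : Type*} [NormedRing R] [NormOneClass R] {x y : R}
    (hx : ‖x‖ ≤ 1) (hy : ‖y‖ ≤ 1) (n : ℕ) :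
    ‖∑ i ∈ range n, x ^ i * y ^ (n - 1 - i)‖ ≤ n := by
  calc ‖∑ i ∈ range n, x ^ i * y ^ (n - 1 - i)‖ ≤ ∑ _i ∈ range n, (1 : ℝ) := by
        refine (norm_sum_le _ _).trans (sum_le_sum fun i _ => (norm_mul_le _ _).trans ?_)
        exact mul_le_one₀ ((norm_pow_le _ _).trans (pow_le_one₀ (norm_nonneg _) hx))
          (norm_nonneg _) ((norm_pow_le _ _).trans (pow_le_one₀ (norm_nonneg _) hy))
    _ = n := by simp

lemma norm_sum_lt_card_of_ne {ι V : Type*} [NormedAddCommGroup V] [NormedSpace ℝ V]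
    [StrictConvexSpace ℝ V] {s : Finset ι} {z : ι → V} (hz : ∀ i ∈ s, ‖z i‖ ≤ 1) {i j : ι}
    (hi : i ∈ s) (hj : j ∈ s) (hij : z i ≠ z j) :
    ‖∑ k ∈ s, z k‖ < #s := by
  have hs : (0 : ℝ) < #s := by exact_mod_cast card_pos.2 ⟨i, hi⟩
  have hw : (#s : ℝ)⁻¹ ≠ 0 := inv_ne_zero hs.ne'
  have hmean := norm_sum_lt_of_strictConvexSpace (w := fun _ => (#s : ℝ)⁻¹) (r := 1)
    (fun _ _ => inv_nonneg.2 hs.le) (by simp [hs.ne']) hi hj hij hw hw hz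
  rwa [← smul_sum, norm_smul, Real.norm_of_nonneg (inv_nonneg.2 hs.le), inv_mul_lt_iff₀ hs,
    mul_one] at hmean

lemma norm_geom_sum₂_lt {x y : ℂ} (hx : ‖x‖ ≤ 1) (hy : ‖y‖ ≤ 1) (hy₀ : y ≠ 0) (hxy : x ≠ y)
    {n : ℕ} (hn : 2 ≤ n) :
    ‖∑ i ∈ range n, x ^ i * y ^ (n - 1 - i)‖ < n := by
  have hterm : ∀ i ∈ range n, ‖x ^ i * y ^ (n - 1 - i)‖ ≤ 1 := fun i _ => by
    rw [norm_mul, norm_pow, norm_pow]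
    exact mul_le_one₀ (pow_le_one₀ (norm_nonneg _) hx) (by positivity)
      (pow_le_one₀ (norm_nonneg _) hy)
  have hne : x ^ 0 * y ^ (n - 1 - 0) ≠ x ^ 1 * y ^ (n - 1 - 1) := by
    rw [pow_zero, one_mul, pow_one, show n - 1 - 0 = n - 2 + 1 by omega, pow_succ',
      show n - 1 - 1 = n - 2 by omega]
    exact fun h => hxy (mul_right_cancel₀ (pow_ne_zero _ hy₀) h).symm
  simpa using norm_sum_lt_card_of_ne hterm (mem_range.2 (by omega)) (mem_range.2 (by omega)) hne

lemma norm_pow_sub_pow_le {R : Type*} [NormedCommRing R] [NormOneClass R] {x y : R}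
    (hx : ‖x‖ ≤ 1) (hy : ‖y‖ ≤ 1) (n : ℕ) :
    ‖x ^ n - y ^ n‖ ≤ n * ‖x - y‖ := by
  rw [← geom_sum₂_mul]
  exact (norm_mul_le _ _).trans
    (mul_le_mul_of_nonneg_right (norm_geom_sum₂_le hx hy n) (norm_nonneg _))

lemma norm_pow_sub_pow_lt {x y : ℂ} (hx : ‖x‖ ≤ 1) (hy : ‖y‖ ≤ 1) (hy₀ : y ≠ 0) (hxy : x ≠ y)
    {n : ℕ} (hn : 2 ≤ n) :
    ‖x ^ n - y ^ n‖ < n * ‖x - y‖ := by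
  rw [← geom_sum₂_mul, norm_mul]
  exact mul_lt_mul_of_pos_right (norm_geom_sum₂_lt hx hy hy₀ hxy hn)
    (norm_pos_iff.2 (sub_ne_zero.2 hxy))

lemma norm_inv_sub_inv_of_norm_eq_one {𝕜 : Type*} [NormedDivisionRing 𝕜] {x y : 𝕜}
    (hx : ‖x‖ = 1) (hy : ‖y‖ = 1) :
    ‖x⁻¹ - y⁻¹‖ = ‖x - y‖ := by
  rw [inv_sub_inv' (norm_ne_zero_iff.1 (by simp [hx])) (norm_ne_zero_iff.1 (by simp [hy])),
    norm_mul, norm_mul, norm_inv, norm_inv, hx, hy, norm_sub_rev]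
  simp

lemma sum_Icc_neg_natCast_natCast {M : Type*} [AddCommMonoid M] (F : ℤ → M) {m k : ℕ}
    (hm : 1 ≤ m) (hk : 1 ≤ k) :
    ∑ j ∈ Icc (-(m : ℤ)) k, F j
      = F 0 + F 1 + F (-1) + ∑ n ∈ Icc 2 k, F n + ∑ n ∈ Icc 2 m, F (-n) := by
  have hsplit : Icc (-(m : ℤ)) k
      = (Icc 0 k).image (fun n : ℕ => (n : ℤ)) ∪ (Icc 1 m).image (fun n : ℕ => -(n : ℤ)) := by
    ext j
    simp only [mem_Icc, mem_union, mem_image]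
    constructor
    · intro h
      rcases le_or_gt 0 j with hj | hj
      · exact Or.inl ⟨j.toNat, by omega, by omega⟩
      · exact Or.inr ⟨(-j).toNat, by omega, by omega⟩
    · rintro (⟨n, hn, rfl⟩ | ⟨n, hn, rfl⟩) <;> omega
  have hdisj : Disjoint ((Icc 0 k).image (fun n : ℕ => (n : ℤ)))
      ((Icc 1 m).image (fun n : ℕ => -(n : ℤ))) := by
    simp only [disjoint_left, mem_image, mem_Icc]
    rintro _ ⟨a, ha, rfl⟩ ⟨b, hb, h⟩
    omega
  have h1k : Icc 1 k = insert 1 (Icc 2 k) := (insert_Icc_add_one_left_eq_Icc hk).symm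
  have h1m : Icc 1 m = insert 1 (Icc 2 m) := (insert_Icc_add_one_left_eq_Icc hm).symm
  rw [hsplit, sum_union hdisj, sum_image (by simp), sum_image (by simp),
    ← insert_Icc_add_one_left_eq_Icc (Nat.zero_le k), zero_add, h1k, h1m,
    sum_insert (by simp), sum_insert (by simp), sum_insert (by simp)]
  simp only [Nat.cast_zero, Nat.cast_one]
  abel

lemma norm_sum_mul_pow_sub_pow_le {R : Type*} [NormedCommRing R] [NormOneClass R]
    (s : Finset ℕ) (a : ℕ → R) {x y : R} (hx : ‖x‖ ≤ 1) (hy : ‖y‖ ≤ 1) :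
    ‖∑ n ∈ s, a n * (x ^ n - y ^ n)‖ ≤ (∑ n ∈ s, n * ‖a n‖) * ‖x - y‖ := by
  rw [sum_mul]
  refine (norm_sum_le _ _).trans (sum_le_sum fun n _ => (norm_mul_le _ _).trans ?_)
  calc ‖a n‖ * ‖x ^ n - y ^ n‖ ≤ ‖a n‖ * (n * ‖x - y‖) := by
        gcongr; exact norm_pow_sub_pow_le hx hy n
    _ = n * ‖a n‖ * ‖x - y‖ := by ring

lemma norm_sum_mul_pow_sub_pow_lt (s : Finset ℕ) (a : ℕ → ℂ) {x y : ℂ} (hx : ‖x‖ ≤ 1)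
    (hy : ‖y‖ ≤ 1) (hy₀ : y ≠ 0) (hxy : x ≠ y) {n₀ : ℕ} (hn₀ : n₀ ∈ s) (h2 : 2 ≤ n₀)
    (ha : a n₀ ≠ 0) :
    ‖∑ n ∈ s, a n * (x ^ n - y ^ n)‖ < (∑ n ∈ s, n * ‖a n‖) * ‖x - y‖ := by
  rw [sum_mul]
  refine (norm_sum_le _ _).trans_lt (sum_lt_sum (fun n _ => ?_) ⟨n₀, hn₀, ?_⟩)
  · calc ‖a n * (x ^ n - y ^ n)‖ ≤ ‖a n‖ * (n * ‖x - y‖) := by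
          rw [norm_mul]; gcongr; exact norm_pow_sub_pow_le hx hy n
      _ = n * ‖a n‖ * ‖x - y‖ := by ring
  · calc ‖a n₀ * (x ^ n₀ - y ^ n₀)‖ < ‖a n₀‖ * (n₀ * ‖x - y‖) := by
          rw [norm_mul]
          exact mul_lt_mul_of_pos_left (norm_pow_sub_pow_lt hx hy hy₀ hxy h2) (norm_pos_iff.2 ha)
      _ = n₀ * ‖a n₀‖ * ‖x - y‖ := by ring

lemma laurent_sum_sub_laurent_sum {K : Type*} [Field K] (b : ℤ → K) {m k : ℕ} (hm : 1 ≤ m)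
    (hk : 1 ≤ k) (x y : K) :
    ∑ j ∈ Icc (-(m : ℤ)) k, b j * x ^ j - ∑ j ∈ Icc (-(m : ℤ)) k, b j * y ^ j
      = b 1 * (x - y) + b (-1) * (x⁻¹ - y⁻¹) + ∑ n ∈ Icc 2 k, b n * (x ^ n - y ^ n)
        + ∑ n ∈ Icc 2 m, b (-n) * (x⁻¹ ^ n - y⁻¹ ^ n) := by
  rw [← sum_sub_distrib]
  simp_rw [← mul_sub]
  rw [sum_Icc_neg_natCast_natCast _ hm hk]
  simp only [zpow_zero, sub_self, mul_zero, zero_add, zpow_one, zpow_neg, zpow_natCast, inv_pow]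

/-- Sufficient coefficient condition for a Laurent polynomial to be injective on the
unit circle (Jordan curve, no self-intersections). -/
theorem laurent_jordan_of_coeff (m k : ℕ) (hm : 1 ≤ m) (hk : 1 ≤ k)
    (hmk : 2 ≤ max m k) (b : ℤ → ℂ) (hb : b (-(m : ℤ)) * b k ≠ 0)
    (hcoef : ‖b (-1)‖ + (∑ j ∈ Finset.Icc 2 k, (j : ℝ) * ‖b j‖)
        + (∑ j ∈ Finset.Icc 2 m, (j : ℝ) * ‖b (-(j : ℤ))‖)
        ≤ ‖b 1‖) :
    ∀ ζ₁ ζ₂ : ℂ, ‖ζ₁‖ = 1 → ‖ζ₂‖ = 1 →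
      (∑ j ∈ Finset.Icc (-(m : ℤ)) (k : ℤ), b j * ζ₁ ^ j)
        = (∑ j ∈ Finset.Icc (-(m : ℤ)) (k : ℤ), b j * ζ₂ ^ j) →
      ζ₁ = ζ₂ := by
  intro ζ₁ ζ₂ h₁ h₂ heq
  by_contra hne
  set P := ∑ n ∈ Icc 2 k, b n * (ζ₁ ^ n - ζ₂ ^ n)
  set N := ∑ n ∈ Icc 2 m, b (-n) * (ζ₁⁻¹ ^ n - ζ₂⁻¹ ^ n)
  have hkey : b 1 * (ζ₁ - ζ₂) = -(b (-1) * (ζ₁⁻¹ - ζ₂⁻¹) + P + N) := by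
    linear_combination (laurent_sum_sub_laurent_sum b hm hk ζ₁ ζ₂).symm + heq
  have hinv : ‖ζ₁⁻¹ - ζ₂⁻¹‖ = ‖ζ₁ - ζ₂‖ := norm_inv_sub_inv_of_norm_eq_one h₁ h₂
  have hζ₂ : ζ₂ ≠ 0 := norm_ne_zero_iff.1 (h₂ ▸ one_ne_zero)
  have hinv₁ : ‖ζ₁⁻¹‖ ≤ 1 := by simp [h₁]
  have hinv₂ : ‖ζ₂⁻¹‖ ≤ 1 := by simp [h₂]
  have hPN : ‖P‖ + ‖N‖
      < ((∑ n ∈ Icc 2 k, n * ‖b n‖) + ∑ n ∈ Icc 2 m, n * ‖b (-n)‖) * ‖ζ₁ - ζ₂‖ := by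
    have hP := norm_sum_mul_pow_sub_pow_le (Icc 2 k) (fun n => b n) h₁.le h₂.le
    have hN := hinv ▸ norm_sum_mul_pow_sub_pow_le (Icc 2 m) (fun n => b (-n)) hinv₁ hinv₂
    rw [add_mul]
    rcases le_max_iff.1 hmk with hm₂ | hk₂
    · exact add_lt_add_of_le_of_lt hP (hinv ▸ norm_sum_mul_pow_sub_pow_lt (Icc 2 m)
        (fun n => b (-n)) hinv₁ hinv₂ (inv_ne_zero hζ₂) (inv_injective.ne hne)
        (right_mem_Icc.2 hm₂) hm₂ (left_ne_zero_of_mul hb))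
    · exact add_lt_add_of_lt_of_le (norm_sum_mul_pow_sub_pow_lt (Icc 2 k) (fun n => b n)
        h₁.le h₂.le hζ₂ hne (right_mem_Icc.2 hk₂) hk₂ (right_ne_zero_of_mul hb)) hN
  refine lt_irrefl (‖b 1‖ * ‖ζ₁ - ζ₂‖) ?_
  calc ‖b 1‖ * ‖ζ₁ - ζ₂‖ = ‖b (-1) * (ζ₁⁻¹ - ζ₂⁻¹) + P + N‖ := by
        rw [← norm_mul, hkey, norm_neg]
    _ ≤ ‖b (-1)‖ * ‖ζ₁ - ζ₂‖ + ‖P‖ + ‖N‖ := by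
        rw [← hinv, ← norm_mul]; exact norm_add₃_le
    _ < (‖b (-1)‖ + (∑ n ∈ Icc 2 k, n * ‖b n‖) + ∑ n ∈ Icc 2 m, n * ‖b (-n)‖) * ‖ζ₁ - ζ₂‖ := by
        linarith
    _ ≤ ‖b 1‖ * ‖ζ₁ - ζ₂‖ := by gcongr
end

section
/- For q ≥ 2 the Laurent polynomial b₃(z) = z^{q+1} + 4z + z^{−q+1} satisfies b₃(e^{iθ}) = 2e^{iθ}(2 + cos(qθ)) for all real θ, and consequently b₃ is injective on the unit circle. -/
/-!
On the unit circle `z⁻¹ = conj z`, so `z ^ (q + 1) + z ^ (1 - q) = z (z ^ q + conj z ^ q) = 2 z Re (z ^ q)`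
and `b₃(z) = z · 2 (2 + Re z ^ q)` is `z` times a positive real. Hence `arg b₃(z) = arg z`, and since
`z` lies on the circle it is determined by its argument.
-/

open Complex ComplexConjugate

noncomputable def daviesLaurent (q : ℕ) (z : ℂ) : ℂ := z ^ (q + 1) + 4 * z + z ^ ((1 : ℤ) - q)

lemma daviesLaurent_eq_mul_ofReal {z : ℂ} (hz : ‖z‖ = 1) (q : ℕ) :
    daviesLaurent q z = z * ((2 * (2 + (z ^ q).re) : ℝ) : ℂ) := by
  have hz₀ : z ≠ 0 := norm_ne_zero_iff.mp (hz ▸ one_ne_zero)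
  have hinv : (z ^ q)⁻¹ = conj (z ^ q) := inv_eq_conj (by rw [norm_pow, hz, one_pow])
  have hzpow : z ^ ((1 : ℤ) - q) = z * conj (z ^ q) := by
    rw [zpow_sub₀ hz₀, zpow_one, zpow_natCast, div_eq_mul_inv, hinv]
  have hre : z ^ q + conj (z ^ q) = ((2 * (z ^ q).re : ℝ) : ℂ) := add_conj _
  rw [daviesLaurent, hzpow]
  push_cast at hre ⊢
  linear_combination z * hre

lemma two_add_re_pos_of_norm_lt_two {w : ℂ} (hw : ‖w‖ < 2) : 0 < 2 + w.re := by
  linarith [(abs_le.1 (abs_re_le_norm w)).1]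

lemma arg_daviesLaurent {z : ℂ} (hz : ‖z‖ = 1) (q : ℕ) : arg (daviesLaurent q z) = arg z := by
  have hpos : 0 < 2 * (2 + (z ^ q).re) :=
    mul_pos two_pos (two_add_re_pos_of_norm_lt_two (by rw [norm_pow, hz, one_pow]; norm_num))
  rw [daviesLaurent_eq_mul_ofReal hz, arg_mul_real hpos]

lemma injOn_daviesLaurent (q : ℕ) : Set.InjOn (daviesLaurent q) {z : ℂ | ‖z‖ = 1} :=
  fun z hz w hw h => ext_norm_arg (hz.trans hw.symm)
    (by rw [← arg_daviesLaurent hz q, h, arg_daviesLaurent hw q])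

lemma daviesLaurent_exp_mul_I (q : ℕ) (θ : ℝ) :
    daviesLaurent q (exp (θ * I)) = 2 * exp (θ * I) * (2 + Real.cos (q * θ)) := by
  have hpow : exp (θ * I) ^ q = exp (((q * θ : ℝ) : ℂ) * I) := by
    rw [← exp_nat_mul]; push_cast; ring_nf
  rw [daviesLaurent_eq_mul_ofReal (norm_exp_ofReal_mul_I θ), hpow, exp_ofReal_mul_I_re]
  push_cast
  ring

theorem davies_example_jordan_general (q : ℕ) :
    (∀ θ : ℝ, Complex.exp (θ * I) ^ (q + 1) + 4 * Complex.exp (θ * I)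
        + Complex.exp (θ * I) ^ ((1 : ℤ) - q)
      = 2 * Complex.exp (θ * I) * (2 + Real.cos (q * θ))) ∧
    Set.InjOn (fun z : ℂ => z ^ (q + 1) + 4 * z + z ^ ((1 : ℤ) - q))
      {z : ℂ | ‖z‖ = 1} :=
  ⟨daviesLaurent_exp_mul_I q, injOn_daviesLaurent q⟩

/-- For `q ≥ 2`, `b₃(z) = z^{q+1} + 4z + z^{1−q}` satisfies
`b₃(e^{iθ}) = 2 e^{iθ}(2 + cos qθ)`, and `b₃` is injective on the unit circle. -/
theorem davies_example_jordan (q : ℕ) (hq : 2 ≤ q) :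
    (∀ θ : ℝ, Complex.exp (θ * I) ^ (q + 1) + 4 * Complex.exp (θ * I)
        + Complex.exp (θ * I) ^ ((1 : ℤ) - q)
      = 2 * Complex.exp (θ * I) * (2 + Real.cos (q * θ))) ∧
    Set.InjOn (fun z : ℂ => z ^ (q + 1) + 4 * z + z ^ ((1 : ℤ) - q))
      {z : ℂ | ‖z‖ = 1} :=
  davies_example_jordan_general q
end

section
/- Let b(z) = ∑_{j=−m}^{k} b_j z^j with b_{−m}b_k ≠ 0 and |w| > 2^{m+k}‖b‖_W where ‖b‖_W = ∑_j |b_j|. Then every root z₀ of P(z,w) = z^m(b(z) − w) lying outside the open unit disk satisfies |z₀| ≥ 2. -/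
/-!
At a root, `‖w‖ ‖z₀‖^m = ‖∑ b_j z₀^{m+j}‖`. On `‖z₀‖ ≥ 1` every power `z₀^{m+j}` is dominated by
the top one, `‖z₀‖^{m+k}`, so `‖w‖ ≤ ‖w‖ ‖z₀‖^m ≤ ‖z₀‖^{m+k} ‖b‖_W`; if `‖z₀‖ < 2` this contradicts
`‖w‖ > 2^{m+k} ‖b‖_W`.
-/

theorem norm_sum_mul_zpow_le_of_one_le_norm {𝕜 ι : Type*} [NormedDivisionRing 𝕜]
    (s : Finset ι) (c : ι → 𝕜) (e : ι → ℤ) {N : ℤ} (he : ∀ j ∈ s, e j ≤ N)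
    {z : 𝕜} (hz : 1 ≤ ‖z‖) :
    ‖∑ j ∈ s, c j * z ^ e j‖ ≤ ‖z‖ ^ N * ∑ j ∈ s, ‖c j‖ := by
  rw [Finset.mul_sum]
  refine (norm_sum_le _ _).trans (Finset.sum_le_sum fun j hj => ?_)
  rw [norm_mul, norm_zpow, mul_comm]
  exact mul_le_mul_of_nonneg_right (zpow_le_zpow_right₀ hz (he j hj)) (norm_nonneg _)

theorem roots_large_for_large_w_general (m k : ℕ) (b : ℤ → ℂ) (w : ℂ)
    (hw : 2 ^ (m + k) * (∑ j ∈ Finset.Icc (-(m : ℤ)) (k : ℤ), ‖b j‖)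
      < ‖w‖)
    (z₀ : ℂ) (hz : 1 ≤ ‖z₀‖)
    (hroot : ∑ j ∈ Finset.Icc (-(m : ℤ)) (k : ℤ), b j * z₀ ^ ((m : ℤ) + j)
      = w * z₀ ^ m) :
    2 ≤ ‖z₀‖ := by
  by_contra! hlt
  have hsum := norm_sum_mul_zpow_le_of_one_le_norm (Finset.Icc (-(m : ℤ)) k) b
    (fun j => (m : ℤ) + j) (N := ((m + k : ℕ) : ℤ))
    (fun j hj => by push_cast; linarith [(Finset.mem_Icc.mp hj).2]) hz
  rw [hroot, norm_mul, norm_pow, zpow_natCast] at hsum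
  have htop : ‖z₀‖ ^ (m + k) ≤ 2 ^ (m + k) := pow_le_pow_left₀ (norm_nonneg _) hlt.le _
  have hS : 0 ≤ ∑ j ∈ Finset.Icc (-(m : ℤ)) (k : ℤ), ‖b j‖ := by positivity
  have := calc
    ‖w‖ ≤ ‖w‖ * ‖z₀‖ ^ m := le_mul_of_one_le_right (norm_nonneg _) (one_le_pow₀ hz)
    _ ≤ ‖z₀‖ ^ (m + k) * ∑ j ∈ Finset.Icc (-(m : ℤ)) (k : ℤ), ‖b j‖ := hsum
    _ ≤ 2 ^ (m + k) * ∑ j ∈ Finset.Icc (-(m : ℤ)) (k : ℤ), ‖b j‖ :=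
      mul_le_mul_of_nonneg_right htop hS
  linarith

/-- For `|w| > 2^{m+k}‖b‖_W`, every root of `P(z,w) = z^m(b(z)−w)` in the closed
unit disk has modulus at most `1/2`. -/
theorem roots_large_for_large_w (m k : ℕ) (hm : 1 ≤ m) (hk : 1 ≤ k) (b : ℤ → ℂ)
    (hb : b (-(m : ℤ)) * b k ≠ 0) (w : ℂ)
    (hw : 2 ^ (m + k) * (∑ j ∈ Finset.Icc (-(m : ℤ)) (k : ℤ), ‖b j‖)
      < ‖w‖)
    (z₀ : ℂ) (hz : 1 ≤ ‖z₀‖)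
    (hroot : ∑ j ∈ Finset.Icc (-(m : ℤ)) (k : ℤ), b j * z₀ ^ ((m : ℤ) + j)
      = w * z₀ ^ m) :
    2 ≤ ‖z₀‖ :=
  roots_large_for_large_w_general m k b w hw z₀ hz hroot
end

section
/- Let P(z) = ∑_{j=0}^{n} C(n,j) α_j z^j and Q(z) = ∑_{j=0}^{n} C(n,j) β_j z^j be complex polynomials of degree n ≥ 1 that are apolar, i.e., ∑_{j=0}^{n} (−1)^j C(n,j) α_j β_{n−j} = 0. If all roots of Q lie in a closed disk D, then P has at least one root in D. (Grace's theorem, closed-disk case.) -/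
/-!
Induction on `n`. Let `ζ` be a root of `P`; if `ζ ∉ D` write `P = (z - ζ) R`. Then `R` is apolar,
in degree `n - 1`, to the polar derivative `n Q + (ζ - z) Q'` of `Q` with respect to `ζ`, and by
Laguerre's theorem this polar derivative has degree `n - 1` and all its roots in `D`. By induction
`R`, hence `P`, has a root in `D`; for `n = 0` apolarity cannot hold.
-/

open Finset Polynomial Metric ComplexConjugate

section BinomialForm

variable {R : Type*}

noncomputable def binomPoly [Semiring R] (n : ℕ) (α : ℕ → R) : R[X] :=
  ∑ j ∈ range (n + 1), C (n.choose j * α j) * X ^ j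

theorem coeff_binomPoly [Semiring R] (n : ℕ) (α : ℕ → R) (k : ℕ) :
    (binomPoly n α).coeff k = n.choose k * α k := by
  simp only [binomPoly, finsetSum_coeff, coeff_C_mul_X_pow]
  rw [Finset.sum_ite_eq]
  split_ifs with h
  · rfl
  · rw [Nat.choose_eq_zero_of_lt (by simpa using h), Nat.cast_zero, zero_mul]

theorem eval_binomPoly [CommSemiring R] (n : ℕ) (α : ℕ → R) (z : R) :
    (binomPoly n α).eval z = ∑ j ∈ range (n + 1), n.choose j * α j * z ^ j := by
  simp [binomPoly, eval_finsetSum]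

theorem natDegree_binomPoly [Semiring R] {n : ℕ} {α : ℕ → R} (hα : α n ≠ 0) :
    (binomPoly n α).natDegree = n := by
  refine natDegree_eq_of_le_of_coeff_ne_zero ?_ (by simpa [coeff_binomPoly] using hα)
  exact natDegree_sum_le_of_forall_le _ _ fun j hj =>
    (natDegree_C_mul_X_pow_le _ _).trans (Nat.lt_succ_iff.mp (mem_range.mp hj))

theorem leadingCoeff_binomPoly [Semiring R] {n : ℕ} {α : ℕ → R} (hα : α n ≠ 0) :
    (binomPoly n α).leadingCoeff = α n := by
  simp [leadingCoeff, natDegree_binomPoly hα, coeff_binomPoly]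

def polarCoeff [Semiring R] (ζ : R) (β : ℕ → R) (j : ℕ) : R :=
  β j + ζ * β (j + 1)

theorem C_mul_binomPoly_polarCoeff [CommRing R] (n : ℕ) (ζ : R) (β : ℕ → R) :
    C ((n + 1 : ℕ) : R) * binomPoly n (polarCoeff ζ β) =
      C ((n + 1 : ℕ) : R) * binomPoly (n + 1) β +
        (C ζ - X) * derivative (binomPoly (n + 1) β) := by
  ext (_ | k)
  · simp [coeff_binomPoly, coeff_derivative, polarCoeff]
    ring
  · have h₁ := Nat.add_one_mul_choose_eq n k
    have h₂ := Nat.add_one_mul_choose_eq n (k + 1)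
    have h₃ := Nat.choose_succ_succ' n k
    simp only [coeff_C_mul, coeff_add, sub_mul, coeff_sub, coeff_X_mul, coeff_derivative,
      coeff_binomPoly, polarCoeff]
    apply_fun ((↑) : ℕ → R) at h₁ h₂ h₃
    push_cast at h₁ h₂ h₃ ⊢
    linear_combination ζ * β (k + 2) * h₂ - β (k + 1) * ((n + 1) * h₃ + h₁)

/-- The apolarity form in which `P` enters through its ordinary coefficients and `Q` through its
binomial ones: deflating `P` by a root then becomes polar differentiation of `Q`
(`apolarPairing_X_sub_C_mul`). -/
def apolarPairing [Ring R] (n : ℕ) (p : R[X]) (β : ℕ → R) : R :=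
  ∑ j ∈ range (n + 1), (-1) ^ j * p.coeff j * β (n - j)

theorem apolarPairing_X_sub_C_mul [CommRing R] {n : ℕ} {s : R[X]} (hs : s.natDegree ≤ n)
    (ζ : R) (β : ℕ → R) :
    apolarPairing (n + 1) ((X - C ζ) * s) β = -apolarPairing n s (polarCoeff ζ β) := by
  have hs_top : s.coeff (n + 1) = 0 := coeff_eq_zero_of_natDegree_lt (by omega)
  have shift : ∑ j ∈ range (n + 1), (-1) ^ j * s.coeff (j + 1) * β (n - j) =
      s.coeff 0 * β (n + 1) - ∑ j ∈ range (n + 1), (-1) ^ j * s.coeff j * β (n + 1 - j) := by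
    rw [sum_range_succ, hs_top, sum_range_succ' (fun j => (-1) ^ j * s.coeff j * β (n + 1 - j))]
    simp only [mul_zero, zero_mul, add_zero, pow_zero, one_mul, Nat.sub_zero, pow_succ]
    rw [sub_add_cancel_right, ← sum_neg_distrib]
    refine sum_congr rfl fun j _ => ?_
    rw [Nat.add_sub_add_right]
    ring
  have hreindex : ∑ j ∈ range (n + 1), (-1) ^ j * s.coeff j * β (n + 1 - j) =
      ∑ j ∈ range (n + 1), (-1) ^ j * s.coeff j * β (n - j + 1) :=
    sum_congr rfl fun j hj => by rw [Nat.sub_add_comm (mem_range_succ_iff.mp hj)]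
  have pull_ζ : ∀ f g : ℕ → R, ∑ j ∈ range (n + 1), (-1) ^ j * (ζ * f j) * g j =
      ζ * ∑ j ∈ range (n + 1), (-1) ^ j * f j * g j := fun f g => by
    rw [mul_sum]; exact sum_congr rfl fun _ _ => by ring
  have pull_ζ' : ∀ f g : ℕ → R, ∑ j ∈ range (n + 1), (-1) ^ j * f j * (ζ * g j) =
      ζ * ∑ j ∈ range (n + 1), (-1) ^ j * f j * g j := fun f g => by
    rw [mul_sum]; exact sum_congr rfl fun _ _ => by ring
  rw [apolarPairing, apolarPairing, sum_range_succ' _ (n + 1)]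
  simp only [coeff_X_sub_C_mul, mul_coeff_zero]
  simp only [coeff_sub, coeff_X_zero, coeff_C_zero,
    Nat.add_sub_add_right, Nat.sub_zero, polarCoeff, mul_add, sum_add_distrib, mul_sub, sub_mul,
    sum_sub_distrib, pow_succ, pow_zero, mul_neg_one, neg_mul, sum_neg_distrib, pull_ζ, pull_ζ',
    ← hreindex, shift]
  ring

end BinomialForm

theorem norm_multiset_sum_sub_card_nsmul_le {E : Type*} [SeminormedAddCommGroup E]
    (s : Multiset E) {m : E} {ρ : ℝ} (h : ∀ x ∈ s, ‖x - m‖ ≤ ρ) :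
    ‖s.sum - s.card • m‖ ≤ s.card * ρ := by
  have hsub : s.sum - s.card • m = (s.map (· - m)).sum := by
    rw [Multiset.sum_map_sub, Multiset.map_id', Multiset.map_const', Multiset.sum_replicate]
  calc ‖s.sum - s.card • m‖ ≤ ((s.map (· - m)).map norm).sum := hsub ▸ norm_multiset_sum_le _
    _ ≤ s.card * ρ := by
      simpa using Multiset.sum_le_card_nsmul ((s.map (· - m)).map norm) ρ (by simpa using h)

theorem Complex.multiset_sum_div_card_mem_closedBall {s : Multiset ℂ} (hs : s ≠ 0) {m : ℂ}
    {ρ : ℝ} (h : ∀ x ∈ s, x ∈ closedBall m ρ) : s.sum / s.card ∈ closedBall m ρ := by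
  have hcard : (0 : ℝ) < s.card := by simpa [Nat.pos_iff_ne_zero] using hs
  have hbound := norm_multiset_sum_sub_card_nsmul_le s (m := m) (ρ := ρ)
    (by simpa [dist_eq_norm] using h)
  have hsub : s.sum / s.card - m = (s.sum - s.card • m) / s.card := by
    have hcardC : (s.card : ℂ) ≠ 0 := by simpa using hs
    rw [sub_div, nsmul_eq_mul, mul_div_cancel_left₀ _ hcardC]
  rw [mem_closedBall, dist_eq_norm, hsub, norm_div, Complex.norm_natCast, div_le_iff₀ hcard]
  linarith

theorem Complex.inv_mem_closedBall_iff {a u : ℂ} {r : ℝ} (hr : 0 ≤ r) (ha : r < ‖a‖) :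
    u⁻¹ ∈ closedBall (conj a / (‖a‖ ^ 2 - r ^ 2 : ℝ)) (r / (‖a‖ ^ 2 - r ^ 2)) ↔
      u ∈ closedBall a r := by
  set d := ‖a‖ ^ 2 - r ^ 2 with hd
  have hd0 : 0 < d := by nlinarith [norm_nonneg a]
  rcases eq_or_ne u 0 with rfl | hu
  · simp only [inv_zero, mem_closedBall, dist_eq_norm, zero_sub, norm_neg, norm_div,
      Complex.norm_conj, Complex.norm_real, Real.norm_of_nonneg hd0.le,
      div_le_div_iff_of_pos_right hd0]
  have key : ‖(d : ℂ) - conj a * u‖ ^ 2 - (r * ‖u‖) ^ 2 = d * (‖u - a‖ ^ 2 - r ^ 2) := by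
    have hA : ‖a‖ ^ 2 = a.re * a.re + a.im * a.im := Complex.sq_norm a
    simp only [Complex.sq_norm, mul_pow, Complex.normSq_apply, Complex.sub_re, Complex.sub_im,
      Complex.ofReal_re, Complex.ofReal_im, Complex.mul_re, Complex.mul_im, Complex.conj_re,
      Complex.conj_im]
    rw [hd, hA]
    ring
  have hdu : u⁻¹ - conj a / d = ((d : ℂ) - conj a * u) / (u * d) := by
    have hdC : (d : ℂ) ≠ 0 := by exact_mod_cast hd0.ne'
    field_simp
  rw [mem_closedBall, mem_closedBall, dist_eq_norm, dist_eq_norm, hdu, norm_div, norm_mul,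
    Complex.norm_real, Real.norm_of_nonneg hd0.le, div_le_div_iff₀ (by positivity) hd0,
    ← mul_assoc, mul_le_mul_iff_left₀ hd0, ← sq_le_sq₀ (norm_nonneg _) (by positivity),
    ← sq_le_sq₀ (norm_nonneg _) hr, ← sub_nonpos, key, ← sub_nonpos (a := ‖u - a‖ ^ 2)]
  constructor <;> intro h <;> nlinarith

/-- Laguerre's theorem. If the expression vanished, `1 / (w - ζ)` would be the mean of the
`1 / (w - z)` over the roots `z`. As `w` lies outside the disk, `u ↦ 1 / (w - u)` maps the disk onto
a disk, which is convex, so `ζ` would lie in the disk. -/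
theorem Complex.polar_derivative_eval_ne_zero {q : ℂ[X]} {c ζ w : ℂ} {r : ℝ}
    (hq : 0 < q.natDegree) (hroots : ∀ z, q.IsRoot z → z ∈ closedBall c r)
    (hζ : ζ ∉ closedBall c r) (hw : w ∉ closedBall c r) :
    q.natDegree * q.eval w + (ζ - w) * q.derivative.eval w ≠ 0 := by
  intro h
  have hsplit : q.Splits := IsAlgClosed.splits q
  have hcard : (q.roots.card : ℂ) = q.natDegree := by
    exact_mod_cast hsplit.natDegree_eq_card_roots.symm
  have hroots0 : q.roots ≠ 0 := by
    intro h0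
    rw [h0, Multiset.card_zero, Nat.cast_zero, eq_comm, Nat.cast_eq_zero] at hcard
    omega
  have hr : 0 ≤ r := by
    obtain ⟨z, hz⟩ := Multiset.exists_mem_of_ne_zero hroots0
    exact nonempty_closedBall.mp ⟨z, hroots z (isRoot_of_mem_roots hz)⟩
  have hwq : q.eval w ≠ 0 := fun h0 => hw (hroots w h0)
  set S := (q.roots.map fun z => 1 / (w - z)).sum with hS
  have hmean : q.natDegree + (ζ - w) * S = 0 := by
    rw [hsplit.eval_derivative_eq_eval_mul_sum hwq] at h
    refine (mul_eq_zero.mp ?_).resolve_left hwq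
    linear_combination h
  have hwζ : w - ζ ≠ 0 := by
    intro h0
    rw [show ζ - w = 0 by linear_combination -h0, zero_mul, add_zero, Nat.cast_eq_zero] at hmean
    omega
  have hinv : (w - ζ)⁻¹ = S / q.roots.card := by
    rw [hcard, eq_div_iff (by exact_mod_cast hq.ne'),
      show (q.natDegree : ℂ) = (w - ζ) * S by linear_combination hmean, inv_mul_cancel_left₀ hwζ]
  have ha : r < ‖w - c‖ := by simpa [dist_eq_norm] using hw
  have hball := Complex.multiset_sum_div_card_mem_closedBall
    (s := q.roots.map fun z => 1 / (w - z)) (by simpa using hroots0)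
    (m := conj (w - c) / (‖w - c‖ ^ 2 - r ^ 2 : ℝ)) (ρ := r / (‖w - c‖ ^ 2 - r ^ 2)) (by
      simp only [Multiset.mem_map, forall_exists_index, and_imp]
      rintro _ z hz rfl
      rw [one_div, Complex.inv_mem_closedBall_iff hr ha, mem_closedBall, dist_sub_left]
      exact hroots z (isRoot_of_mem_roots hz))
  rw [Multiset.card_map, ← hS, ← hinv, Complex.inv_mem_closedBall_iff hr ha, mem_closedBall,
    dist_sub_left] at hball
  exact hζ hball

/-- The polar derivative drops in degree exactly when `ζ` is the centroid of the roots. -/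
theorem polarCoeff_ne_zero {n : ℕ} {β : ℕ → ℂ} {c ζ : ℂ} {r : ℝ} (hβ : β (n + 1) ≠ 0)
    (hroots : ∀ z, (binomPoly (n + 1) β).IsRoot z → z ∈ closedBall c r)
    (hζ : ζ ∉ closedBall c r) : polarCoeff ζ β n ≠ 0 := by
  intro h
  set q := binomPoly (n + 1) β
  have hdeg : q.natDegree = n + 1 := natDegree_binomPoly hβ
  have hsplit : q.Splits := IsAlgClosed.splits q
  have hcard : q.roots.card = n + 1 := hsplit.natDegree_eq_card_roots.symm.trans hdeg
  have hvieta := hsplit.nextCoeff_eq_neg_sum_roots_mul_leadingCoeff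
  rw [nextCoeff_of_natDegree_pos (by omega), hdeg, Nat.add_sub_cancel, coeff_binomPoly,
    leadingCoeff_binomPoly hβ, Nat.choose_succ_self_right] at hvieta
  have hcentroid : ζ = q.roots.sum / q.roots.card := by
    rw [hcard, eq_div_iff (Nat.cast_ne_zero.mpr n.succ_ne_zero)]
    refine mul_left_cancel₀ hβ ?_
    unfold polarCoeff at h
    push_cast at hvieta ⊢
    linear_combination (n + 1 : ℂ) * h - hvieta
  refine hζ (hcentroid ▸ Complex.multiset_sum_div_card_mem_closedBall ?_ fun z hz =>
    hroots z (isRoot_of_mem_roots hz))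
  rw [← Multiset.card_pos, hcard]
  omega

theorem binomPoly_polarCoeff_roots_mem_closedBall {n : ℕ} {β : ℕ → ℂ} {c ζ : ℂ} {r : ℝ}
    (hβ : β (n + 1) ≠ 0) (hroots : ∀ z, (binomPoly (n + 1) β).IsRoot z → z ∈ closedBall c r)
    (hζ : ζ ∉ closedBall c r) (w : ℂ) (hw : (binomPoly n (polarCoeff ζ β)).IsRoot w) :
    w ∈ closedBall c r := by
  by_contra hw'
  refine Complex.polar_derivative_eval_ne_zero (by rw [natDegree_binomPoly hβ]; omega) hroots hζ
    hw' ?_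
  have := congrArg (eval w) (C_mul_binomPoly_polarCoeff n ζ β)
  rw [eval_mul, hw.eq_zero, mul_zero, eval_add, eval_mul, eval_mul, eval_sub, eval_C, eval_X,
    eval_C] at this
  rw [natDegree_binomPoly hβ, this.symm]

theorem exists_isRoot_mem_closedBall_of_apolarPairing_eq_zero {c : ℂ} {r : ℝ} :
    ∀ (n : ℕ) {p : ℂ[X]} {β : ℕ → ℂ}, p ≠ 0 → p.natDegree = n → β n ≠ 0 →
      apolarPairing n p β = 0 → (∀ z, (binomPoly n β).IsRoot z → z ∈ closedBall c r) →
      ∃ z, p.IsRoot z ∧ z ∈ closedBall c r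
  | 0, p, β, hp, hdeg, hβ, hap, _ => by
    have hp0 : p.coeff 0 ≠ 0 := hdeg ▸ leadingCoeff_ne_zero.mpr hp
    simp [apolarPairing, hp0, hβ] at hap
  | n + 1, p, β, hp, hdeg, hβ, hap, hroots => by
    obtain ⟨ζ, hζ⟩ := Complex.exists_root (f := p)
      (by rw [degree_eq_natDegree hp, hdeg]; exact_mod_cast n.succ_pos)
    by_cases hζD : ζ ∈ closedBall c r
    · exact ⟨ζ, hζ, hζD⟩
    set s := p /ₘ (X - C ζ)
    have hfac : (X - C ζ) * s = p := mul_divByMonic_eq_iff_isRoot.mpr hζ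
    have hs : s ≠ 0 := by
      rintro h
      rw [h, mul_zero] at hfac
      exact hp hfac.symm
    have hsdeg : s.natDegree = n := by
      have := natDegree_mul (X_sub_C_ne_zero ζ) hs
      rw [hfac, hdeg, natDegree_X_sub_C] at this
      omega
    obtain ⟨z, hz, hzD⟩ := exists_isRoot_mem_closedBall_of_apolarPairing_eq_zero n hs hsdeg
      (polarCoeff_ne_zero hβ hroots hζD)
      (by rw [← neg_eq_zero, ← apolarPairing_X_sub_C_mul hsdeg.le, hfac, hap])
      (binomPoly_polarCoeff_roots_mem_closedBall hβ hroots hζD)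
    exact ⟨z, by rw [← hfac, IsRoot, eval_mul, hz.eq_zero, mul_zero], hzD⟩

theorem grace_theorem_disk_general (n : ℕ) (α β : ℕ → ℂ)
    (hα : α n ≠ 0) (hβ : β n ≠ 0)
    (hapolar : ∑ j ∈ Finset.range (n + 1),
      (-1 : ℂ) ^ j * (n.choose j : ℂ) * α j * β (n - j) = 0)
    (c : ℂ) (r : ℝ)
    (hQ : ∀ z : ℂ, (∑ j ∈ Finset.range (n + 1), (n.choose j : ℂ) * β j * z ^ j) = 0 →
      ‖z - c‖ ≤ r) :
    ∃ z : ℂ, (∑ j ∈ Finset.range (n + 1), (n.choose j : ℂ) * α j * z ^ j) = 0 ∧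
      ‖z - c‖ ≤ r := by
  have hP : binomPoly n α ≠ 0 := fun h => hα (by
    rw [← leadingCoeff_binomPoly hα, h, leadingCoeff_zero])
  have hapolar' : apolarPairing n (binomPoly n α) β = 0 := by
    simpa only [apolarPairing, coeff_binomPoly, mul_assoc] using hapolar
  obtain ⟨z, hz, hzD⟩ := exists_isRoot_mem_closedBall_of_apolarPairing_eq_zero n hP
    (natDegree_binomPoly hα) hβ hapolar' fun z hz => by
      rw [IsRoot, eval_binomPoly] at hz
      simpa [dist_eq_norm] using hQ z hz
  rw [IsRoot, eval_binomPoly] at hz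
  exact ⟨z, hz, by simpa [dist_eq_norm] using hzD⟩

/-- Grace's theorem (closed-disk case): if `P` and `Q` are apolar polynomials of
degree `n ≥ 1` and all roots of `Q` lie in a closed disk `D`, then `P` has a root
in `D`. Polynomials are written in binomial form `∑ C(n,j) αⱼ zʲ`. -/
theorem grace_theorem_disk (n : ℕ) (hn : 1 ≤ n) (α β : ℕ → ℂ)
    (hα : α n ≠ 0) (hβ : β n ≠ 0)
    (hapolar : ∑ j ∈ Finset.range (n + 1),
      (-1 : ℂ) ^ j * (n.choose j : ℂ) * α j * β (n - j) = 0)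
    (c : ℂ) (r : ℝ) (hr : 0 ≤ r)
    (hQ : ∀ z : ℂ, (∑ j ∈ Finset.range (n + 1), (n.choose j : ℂ) * β j * z ^ j) = 0 →
      ‖z - c‖ ≤ r) :
    ∃ z : ℂ, (∑ j ∈ Finset.range (n + 1), (n.choose j : ℂ) * α j * z ^ j) = 0 ∧
      ‖z - c‖ ≤ r :=
  grace_theorem_disk_general n α β hα hβ hapolar c r hQ
end

section
/- Let b(z) = b_{−1}z^{−1} + b_0 + b_1 z + … + b_k z^k with b_{−1} b_k ≠ 0, and suppose |b_{k−s}| > C(k+1, s)|b_{−1}| for some 0 ≤ s ≤ k−1. Then for every w ∈ ℂ, the polynomial P(z) = b_{−1} + (b_0 − w)z + b_1 z² + … + b_k z^{k+1} is apolar to Q(z) = z^{k+1} + C(k+1,s) a z^s, where a = (−1)^{k−s} b_{−1}/b_{k−s}, and every root of Q has modulus at most ρ = (C(k+1,s)|b_{−1}/b_{k−s}|)^{1/(k+1−s)} < 1. -/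
/-!
Only two coefficients of `Q` are nonzero, so the apolarity sum has just two terms,
`b₋₁` and `(−1)^{k+1−s} b_{k−s} · C(k+1,s) a / C(k+1,s) = −b₋₁`; they cancel by the choice
of `a`. A nonzero root of `Q` satisfies `z^{k+1−s} = −C(k+1,s) a`, so `|z| = ρ`, and
`ρ < 1` is a rewriting of `|b_{k−s}| > C(k+1,s)|b₋₁|`.
-/

open Finset

section MonicBinomial

variable {K : Type*}

def monicBinomialCoeff [Zero K] [One K] (n s : ℕ) (c : K) (j : ℕ) : K :=
  if j = n then 1 else if j = s then c else 0

lemma sum_range_monicBinomialCoeff_mul_pow [Semiring K] (c z : K) {n s : ℕ} (hsn : s < n) :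
    ∑ j ∈ range (n + 1), monicBinomialCoeff n s c j * z ^ j = c * z ^ s + z ^ n := by
  rw [sum_eq_add_of_mem s n (by rw [mem_range]; omega) (by rw [mem_range]; omega) hsn.ne]
  · simp [monicBinomialCoeff, hsn.ne]
  · intro j _ hj
    simp [monicBinomialCoeff, hj.1, hj.2]

lemma sum_range_apolar_monicBinomialCoeff [DivisionRing K] (p : ℕ → K) (c : K) {n s : ℕ}
    (hsn : s < n) :
    ∑ j ∈ range (n + 1),
        (-1 : K) ^ j * p j * monicBinomialCoeff n s c (n - j) / (n.choose j : K) =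
      p 0 + (-1) ^ (n - s) * p (n - s) * c / (n.choose s : K) := by
  rw [sum_eq_add_of_mem 0 (n - s) (by rw [mem_range]; omega) (by rw [mem_range]; omega)
    (by omega)]
  · simp [monicBinomialCoeff, Nat.sub_sub_self hsn.le, hsn.ne, Nat.choose_symm hsn.le]
  · intro j hj hj0
    rw [monicBinomialCoeff, if_neg (by omega), if_neg (by simp at hj; omega), mul_zero, zero_div]

lemma norm_le_rpow_of_mul_pow_add_pow_eq_zero [NormedDivisionRing K] {z c : K} {s n : ℕ}
    (hsn : s < n) (h : c * z ^ s + z ^ n = 0) : ‖z‖ ≤ ‖c‖ ^ ((1 : ℝ) / (n - s : ℕ)) := by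
  rcases eq_or_ne z 0 with rfl | hz
  · simpa [hsn.ne'] using Real.rpow_nonneg (norm_nonneg c) _
  have hnorm : ‖z‖ ^ (n - s) = ‖c‖ := by
    have hzs : ‖z‖ ^ s ≠ 0 := pow_ne_zero s (norm_ne_zero_iff.mpr hz)
    refine mul_left_cancel₀ hzs ?_
    rw [← pow_add, Nat.add_sub_cancel' hsn.le, ← norm_pow, eq_neg_of_add_eq_zero_right h,
      norm_neg, norm_mul, norm_pow, mul_comm]
  rw [← hnorm, one_div, Real.pow_rpow_inv_natCast (norm_nonneg z) (by omega)]

end MonicBinomial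

lemma mul_norm_div_lt_one {E : Type*} [NormedDivisionRing E] {c : ℝ} (hc : 0 ≤ c) {x y : E}
    (h : c * ‖x‖ < ‖y‖) : c * ‖x / y‖ < 1 := by
  have hy : 0 < ‖y‖ := lt_of_le_of_lt (by positivity) h
  rwa [norm_div, ← mul_div_assoc, div_lt_one hy]

theorem regular_of_coeff_apolar_general (k s : ℕ) (hs : s < k) (bneg : ℂ) (b : ℕ → ℂ)
    (hcond : ((k + 1).choose s : ℝ) * ‖bneg‖ < ‖b (k - s)‖)
    (w : ℂ) :
    letI n := k + 1
    letI a : ℂ := (-1) ^ (k - s) * bneg / b (k - s)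
    letI p : ℕ → ℂ := fun j => if j = 0 then bneg else if j = 1 then b 0 - w else b (j - 1)
    letI qc : ℕ → ℂ := fun j =>
      if j = k + 1 then 1 else if j = s then ((k + 1).choose s : ℂ) * a else 0
    letI ρ : ℝ := (((k + 1).choose s : ℝ) * ‖bneg / b (k - s)‖)
      ^ ((1 : ℝ) / (k + 1 - s : ℕ))
    (∑ j ∈ Finset.range (n + 1), (-1 : ℂ) ^ j * p j * qc (n - j) / (n.choose j : ℂ) = 0) ∧
    (∀ z : ℂ, (∑ j ∈ Finset.range (n + 1), qc j * z ^ j) = 0 → ‖z‖ ≤ ρ) ∧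
    ρ < 1 := by
  beta_reduce
  have hC : ((k + 1).choose s : ℂ) ≠ 0 := by exact_mod_cast (Nat.choose_pos (by omega)).ne'
  have hbks : b (k - s) ≠ 0 := norm_pos_iff.mp (lt_of_le_of_lt (by positivity) hcond)
  have hρ : ((k + 1).choose s : ℝ) * ‖bneg / b (k - s)‖ < 1 :=
    mul_norm_div_lt_one (by positivity) hcond
  refine ⟨(sum_range_apolar_monicBinomialCoeff _ _ (by omega)).trans ?_,
    fun z hz => ?_, Real.rpow_lt_one (by positivity) hρ
      (div_pos one_pos (by exact_mod_cast (by omega : 0 < k + 1 - s)))⟩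
  · rw [if_pos rfl, if_neg (by omega), if_neg (by omega), show k + 1 - s - 1 = k - s by omega,
      show k + 1 - s = k - s + 1 by omega]
    have hsign : (-1 : ℂ) ^ (k - s + 1) * (-1) ^ (k - s) = -1 := by
      rw [← pow_add]
      exact Odd.neg_one_pow ⟨k - s, by ring⟩
    field_simp
    linear_combination bneg * hsign
  · have hroot := norm_le_rpow_of_mul_pow_add_pow_eq_zero (by omega)
      ((sum_range_monicBinomialCoeff_mul_pow _ z (by omega)).symm.trans hz)
    rwa [mul_div_assoc, norm_mul, norm_mul, norm_pow, norm_neg, norm_one, one_pow,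
      one_mul, Complex.norm_natCast] at hroot

/-- For `b(z) = b₋₁z⁻¹ + b₀ + … + b_k z^k` with `|b_{k−s}| > C(k+1,s)|b₋₁|`:
for any `w`, the polynomial `P(z) = b₋₁ + (b₀−w)z + … + b_k z^{k+1}` is apolar to
`Q(z) = z^{k+1} + C(k+1,s) a z^s` with `a = (−1)^{k−s} b₋₁ / b_{k−s}`, all roots of
`Q` have modulus at most `ρ = (C(k+1,s)|b₋₁/b_{k−s}|)^{1/(k+1−s)}`, and `ρ < 1`.
(Apolarity of `∑ pⱼ zʲ`, `∑ qⱼ zʲ` of degree `n` reads `∑ (−1)ʲ pⱼ q_{n−j}/C(n,j) = 0`.) -/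
theorem regular_of_coeff_apolar (k s : ℕ) (hs : s < k) (bneg : ℂ) (b : ℕ → ℂ)
    (hbneg : bneg ≠ 0) (hbk : b k ≠ 0)
    (hcond : ((k + 1).choose s : ℝ) * ‖bneg‖ < ‖b (k - s)‖)
    (w : ℂ) :
    letI n := k + 1
    letI a : ℂ := (-1) ^ (k - s) * bneg / b (k - s)
    letI p : ℕ → ℂ := fun j => if j = 0 then bneg else if j = 1 then b 0 - w else b (j - 1)
    letI qc : ℕ → ℂ := fun j =>
      if j = k + 1 then 1 else if j = s then ((k + 1).choose s : ℂ) * a else 0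
    letI ρ : ℝ := (((k + 1).choose s : ℝ) * ‖bneg / b (k - s)‖)
      ^ ((1 : ℝ) / (k + 1 - s : ℕ))
    (∑ j ∈ Finset.range (n + 1), (-1 : ℂ) ^ j * p j * qc (n - j) / (n.choose j : ℂ) = 0) ∧
    (∀ z : ℂ, (∑ j ∈ Finset.range (n + 1), qc j * z ^ j) = 0 → ‖z‖ ≤ ρ) ∧
    ρ < 1 :=
  regular_of_coeff_apolar_general k s hs bneg b hcond w
end

section
/- Let b(t) = ∑_{j=−1}^{∞} b_j t^j be a continuous function on 𝕋 with b_{−1} ≠ 0 and ∑_j |b_j| < ∞, let w ∉ b(𝕋) with winding number of b − w around 0 equal to zero, and suppose P(z,w) = z(b(z)−w) has exactly one root ζ₀ in the open unit disk (simple, ζ₀ ≠ 0). Then the first Fourier coefficient a₁(w) = ∫_𝕋 (b(t)−w)⁻¹ t⁻¹ m(dt) of a = 1/(b−w) satisfies a₁(w) = 1/b_{−1} + 1/(ζ₀ P′(ζ₀, w)), where m is normalized Lebesgue measure on 𝕋. -/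
/-!
Write `P(z) = (z - ζ₀) k(z)` with `k = dslope P ζ₀`. Since `ζ₀` is the only zero of `P` on the
closed disc and it is simple, `k` has no zero there, so `1/k` is holomorphic on the disc and
continuous up to the circle. The partial fraction decomposition
`1/(z (z - ζ₀)) = ζ₀⁻¹ (1/(z - ζ₀) - 1/z)` and the Cauchy integral formula at `ζ₀` and `0`
give `(2πi)⁻¹ ∮ dz/(z P(z)) = ζ₀⁻¹ (1/k(ζ₀) - 1/k(0))`, and `k(ζ₀) = P'(ζ₀)`,
`k(0) = -P(0)/ζ₀ = -b₋₁/ζ₀`.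
-/

open Metric Complex Set Topology Real

theorem diffContOnCl_tsum_mul_pow_ball {a : ℕ → ℂ} (ha : Summable fun n => ‖a n‖) :
    DiffContOnCl ℂ (fun z => ∑' n, a n * z ^ n) (ball 0 1) := by
  have hbound : ∀ n, ∀ z ∈ closedBall (0 : ℂ) 1, ‖a n * z ^ n‖ ≤ ‖a n‖ := by
    intro n z hz
    rw [mem_closedBall_zero_iff] at hz
    rw [norm_mul, norm_pow]
    exact mul_le_of_le_one_right (norm_nonneg _) (pow_le_one₀ (norm_nonneg z) hz)
  refine DiffContOnCl.mk_ball ?_ ?_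
  · exact differentiableOn_tsum_of_summable_norm ha
      (fun n => ((differentiable_const _).mul (differentiable_pow n)).differentiableOn)
      isOpen_ball fun n z hz => hbound n z (ball_subset_closedBall hz)
  · exact continuousOn_tsum (fun n => (continuous_const.mul (continuous_pow n)).continuousOn)
      ha hbound

theorem dslope_ne_zero {𝕜 E : Type*} [NontriviallyNormedField 𝕜] [NormedAddCommGroup E]
    [NormedSpace 𝕜 E] {f : 𝕜 → E} {a : 𝕜} {s : Set 𝕜} (hderiv : deriv f a ≠ 0)
    (hinj : ∀ z ∈ s, f z = f a → z = a) : ∀ z ∈ s, dslope f a z ≠ 0 := by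
  intro z hz
  rcases eq_or_ne z a with rfl | hne
  · rwa [dslope_same]
  · intro hzero
    have hfactor := sub_smul_dslope f a z
    rw [hzero, smul_zero, eq_comm, sub_eq_zero] at hfactor
    exact hne (hinj z hz hfactor)

section

variable {E : Type*} [NormedAddCommGroup E] [NormedSpace ℂ E] {c a b : ℂ} {R : ℝ}

theorem DiffContOnCl.dslope [CompleteSpace E] {f : ℂ → E} (hf : DiffContOnCl ℂ f (ball c R))
    (ha : a ∈ ball c R) :
    DiffContOnCl ℂ (dslope f a) (ball c R) := by
  have hnhds : ball c R ∈ 𝓝 a := isOpen_ball.mem_nhds ha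
  exact ⟨(differentiableOn_dslope hnhds).2 hf.differentiableOn,
    (continuousOn_dslope (Filter.mem_of_superset hnhds subset_closure)).2
      ⟨hf.continuousOn, hf.differentiableAt isOpen_ball ha⟩⟩

theorem DiffContOnCl.circleIntegrable_sub_inv_smul {f : ℂ → E}
    (hf : DiffContOnCl ℂ f (ball c R)) (ha : a ∈ ball c R) :
    CircleIntegrable (fun z => (z - a)⁻¹ • f z) c R := by
  refine ContinuousOn.circleIntegrable (dist_nonneg.trans (mem_ball.1 ha).le) ?_
  refine ((continuousOn_id.sub continuousOn_const).inv₀ fun z hz => ?_).smul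
    (hf.continuousOn_ball.mono sphere_subset_closedBall)
  exact sub_ne_zero.2 (sphere_disjoint_ball.ne_of_mem hz ha)

theorem DiffContOnCl.circleIntegral_inv_sub_mul_sub_smul [CompleteSpace E] {f : ℂ → E}
    (hf : DiffContOnCl ℂ f (ball c R)) (ha : a ∈ ball c R) (hb : b ∈ ball c R) (hab : a ≠ b) :
    (∮ z in C(c, R), ((z - a) * (z - b))⁻¹ • f z)
      = (2 * π * I / (a - b)) • (f a - f b) := by
  have hpartial : EqOn (fun z => ((z - a) * (z - b))⁻¹ • f z)
      (fun z => (a - b)⁻¹ • ((z - a)⁻¹ • f z - (z - b)⁻¹ • f z)) (sphere c R) := by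
    intro z hz
    have hza : z - a ≠ 0 := sub_ne_zero.2 (sphere_disjoint_ball.ne_of_mem hz ha)
    have hzb : z - b ≠ 0 := sub_ne_zero.2 (sphere_disjoint_ball.ne_of_mem hz hb)
    have hab' : a - b ≠ 0 := sub_ne_zero.2 hab
    simp only [smul_smul, ← sub_smul]
    congr 1
    field_simp
    ring
  rw [circleIntegral.integral_congr (dist_nonneg.trans (mem_ball.1 ha).le) hpartial,
    circleIntegral.integral_smul, circleIntegral.integral_sub
    (hf.circleIntegrable_sub_inv_smul ha) (hf.circleIntegrable_sub_inv_smul hb),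
    hf.circleIntegral_sub_inv_smul ha, hf.circleIntegral_sub_inv_smul hb,
    ← smul_sub, smul_smul, div_eq_inv_mul]

end

theorem circleIntegral_inv_sub_mul_of_unique_simple_zero {c a ζ₀ : ℂ} {R : ℝ} {P : ℂ → ℂ}
    (hP : DiffContOnCl ℂ P (ball c R)) (ha : a ∈ ball c R) (hζ₀ : ζ₀ ∈ ball c R) (hne : ζ₀ ≠ a)
    (hroot : P ζ₀ = 0) (hsimple : deriv P ζ₀ ≠ 0)
    (hzeros : ∀ z ∈ closedBall c R, P z = 0 → z = ζ₀) :
    (∮ z in C(c, R), ((z - a) * P z)⁻¹)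
      = 2 * π * I * (1 / ((ζ₀ - a) * deriv P ζ₀) + 1 / P a) := by
  set k := dslope P ζ₀
  have hfactor : ∀ z, P z = (z - ζ₀) * k z := fun z => by
    simpa [hroot] using (sub_smul_dslope P ζ₀ z).symm
  have hk : DiffContOnCl ℂ (fun z => (k z)⁻¹) (ball c R) := by
    refine (hP.dslope hζ₀).inv fun z hz => ?_
    rw [closure_ball c (ne_of_gt (pos_of_mem_ball hζ₀))] at hz
    exact dslope_ne_zero hsimple (fun y hy hPy => hzeros y hy (hPy.trans hroot)) z hz
  have hka : (k a)⁻¹ = (a - ζ₀) / P a := by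
    rw [hfactor a, div_mul_cancel_left₀ (sub_ne_zero.2 hne.symm)]
  calc (∮ z in C(c, R), ((z - a) * P z)⁻¹)
      = ∮ z in C(c, R), ((z - ζ₀) * (z - a))⁻¹ • (k z)⁻¹ := by
        congr 1 with z
        rw [hfactor, smul_eq_mul, ← mul_inv]
        ring
    _ = 2 * π * I / (ζ₀ - a) * ((deriv P ζ₀)⁻¹ - (a - ζ₀) / P a) := by
        rw [hk.circleIntegral_inv_sub_mul_sub_smul hζ₀ ha hne, show k ζ₀ = deriv P ζ₀ from
          dslope_same P ζ₀, hka, smul_eq_mul]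
    _ = 2 * π * I * (1 / ((ζ₀ - a) * deriv P ζ₀) + 1 / P a) := by
        have : ζ₀ - a ≠ 0 := sub_ne_zero.2 hne
        field_simp
        ring

theorem first_fourier_coeff_residue_general (b : ℕ → ℂ) (bneg : ℂ)
    (hsum : Summable fun j : ℕ => ‖b j‖) (w : ℂ)
    (P : ℂ → ℂ) (hP : ∀ z : ℂ, P z = bneg + (∑' j : ℕ, b j * z ^ (j + 1)) - w * z)
    (ζ₀ : ℂ) (hζ₀ : ‖ζ₀‖ < 1) (hζne : ζ₀ ≠ 0) (hroot : P ζ₀ = 0)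
    (hsimple : deriv P ζ₀ ≠ 0)
    (huniq : ∀ z : ℂ, ‖z‖ < 1 → P z = 0 → z = ζ₀)
    (hcirc : ∀ z : ℂ, ‖z‖ = 1 → P z ≠ 0) :
    (1 / (2 * Real.pi * Complex.I)) * (∮ z in C(0, 1), (z * P z)⁻¹)
      = 1 / bneg + 1 / (ζ₀ * deriv P ζ₀) := by
  have hshift : ∀ z : ℂ, ∑' j, b j * z ^ (j + 1) = z * ∑' j, b j * z ^ j := fun z => by
    rw [← tsum_mul_left]
    exact tsum_congr fun j => by ring
  have hPeq : P = fun z => bneg + z • ((∑' j, b j * z ^ j) - w) := funext fun z => by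
    rw [hP, hshift, smul_eq_mul]
    ring
  have hPdiff : DiffContOnCl ℂ P (ball 0 1) := by
    rw [hPeq]
    exact (differentiable_id.diffContOnCl.smul
      ((diffContOnCl_tsum_mul_pow_ball hsum).sub_const w)).const_add bneg
  have hzeros : ∀ z ∈ closedBall (0 : ℂ) 1, P z = 0 → z = ζ₀ := fun z hz hPz =>
    (mem_closedBall_zero_iff.1 hz).lt_or_eq.elim (huniq z · hPz) fun h => (hcirc z h hPz).elim
  have hP0 : P 0 = bneg := by simp [hP]
  have hres := circleIntegral_inv_sub_mul_of_unique_simple_zero hPdiff (mem_ball_self one_pos)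
    (mem_ball_zero_iff.2 hζ₀) hζne hroot hsimple hzeros
  simp only [sub_zero, hP0] at hres
  rw [hres, ← mul_assoc, one_div_mul_cancel (by simp [pi_ne_zero, I_ne_zero]), one_mul, add_comm]

/-- Residue computation of the first Fourier coefficient of `a = 1/(b−w)`:
if `P(z,w) = z(b(z)−w)` has exactly one (simple, nonzero) root `ζ₀` in the open unit
disk and does not vanish on the unit circle, then
`a₁(w) = (2πi)⁻¹ ∮_{|ζ|=1} dζ/(ζ P(ζ,w)) = 1/b₋₁ + 1/(ζ₀ P'(ζ₀,w))`. -/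
theorem first_fourier_coeff_residue (b : ℕ → ℂ) (bneg : ℂ) (hbneg : bneg ≠ 0)
    (hsum : Summable fun j : ℕ => ‖b j‖) (w : ℂ)
    (P : ℂ → ℂ) (hP : ∀ z : ℂ, P z = bneg + (∑' j : ℕ, b j * z ^ (j + 1)) - w * z)
    (ζ₀ : ℂ) (hζ₀ : ‖ζ₀‖ < 1) (hζne : ζ₀ ≠ 0) (hroot : P ζ₀ = 0)
    (hsimple : deriv P ζ₀ ≠ 0)
    (huniq : ∀ z : ℂ, ‖z‖ < 1 → P z = 0 → z = ζ₀)
    (hcirc : ∀ z : ℂ, ‖z‖ = 1 → P z ≠ 0) :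
    (1 / (2 * Real.pi * Complex.I)) * (∮ z in C(0, 1), (z * P z)⁻¹)
      = 1 / bneg + 1 / (ζ₀ * deriv P ζ₀) :=
  first_fourier_coeff_residue_general b bneg hsum w P hP ζ₀ hζ₀ hζne hroot hsimple huniq hcirc
end
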